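/- For every nonempty interval I ⊆ ℝ there exist a locally finite family ([a_α, b_α])_{α ∈ A} of compact intervals of ℝ and a monomorphism k_I → ⊕_{α ∈ A} k_{[a_α,b_α]} in the category of sheaves of k-vector spaces on ℝ. -/

import Mathlib

open CategoryTheory TopologicalSpace Set Topology

noncomputable section

variable (k : Type) [Field k]

/-- The support of the function `s : V ∩ I → k` is closed in `V`. -/
def SuppClosedIn (I V : Set ℝ) (s : ↥(V ∩ I) → k) : Prop :=
  ∀ x ∈ V, x ∈ closure {y : ℝ | ∃ h : y ∈ V ∩ I, s ⟨y, h⟩ ≠ 0} →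
    ∃ h : x ∈ V ∩ I, s ⟨x, h⟩ ≠ 0

lemma zero_locConst (I V : Set ℝ) :
    IsLocallyConstant (0 : ↥(V ∩ I) → k) ∧ SuppClosedIn k I V 0 := by
  constructor
  · exact IsLocallyConstant.const 0
  · intro x _ hx
    exfalso
    have h0 : {y : ℝ | ∃ h : y ∈ V ∩ I, (0 : ↥(V ∩ I) → k) ⟨y, h⟩ ≠ 0} = ∅ := by
      ext y; simp
    rw [h0, closure_empty] at hx
    exact hx

/-- The sections over `V` of the sheaf `k_I`: locally constant functions on `V ∩ I`
whose support is closed in `V`. -/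
def secSub (I V : Set ℝ) : Submodule k (↥(V ∩ I) → k) where
  carrier := {s | IsLocallyConstant s ∧ SuppClosedIn k I V s}
  zero_mem' := zero_locConst k I V
  add_mem' := by
    rintro s t ⟨hslc, hscl⟩ ⟨htlc, htcl⟩
    have hlc : IsLocallyConstant (s + t) := hslc.comp₂ htlc (· + ·)
    refine ⟨hlc, ?_⟩
    intro x hxV hxcl
    have hsub : {y : ℝ | ∃ h : y ∈ V ∩ I, (s + t) ⟨y, h⟩ ≠ 0}
        ⊆ {y : ℝ | ∃ h : y ∈ V ∩ I, s ⟨y, h⟩ ≠ 0}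
          ∪ {y : ℝ | ∃ h : y ∈ V ∩ I, t ⟨y, h⟩ ≠ 0} := by
      rintro y ⟨h, hy⟩
      by_cases hsy : s ⟨y, h⟩ = 0
      · refine Or.inr ⟨h, fun h0 => hy ?_⟩
        show s ⟨y, h⟩ + t ⟨y, h⟩ = 0
        rw [hsy, h0, add_zero]
      · exact Or.inl ⟨h, hsy⟩
    have hxVI : x ∈ V ∩ I := by
      have hcl2 := closure_mono hsub hxcl
      rw [closure_union] at hcl2
      rcases hcl2 with h | h
      · exact (hscl x hxV h).choose
      · exact (htcl x hxV h).choose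
    refine ⟨hxVI, ?_⟩
    have hA : IsClosed {y : ↥(V ∩ I) | (s + t) y ≠ 0} := by
      have h1 : IsOpen ((s + t) ⁻¹' {0}) := hlc {0}
      have h2 := h1.isClosed_compl
      have h3 : ((s + t) ⁻¹' {0})ᶜ = {y : ↥(V ∩ I) | (s + t) y ≠ 0} := by
        ext y; simp
      exact h3 ▸ h2
    have hmem : (⟨x, hxVI⟩ : ↥(V ∩ I)) ∈ closure {y : ↥(V ∩ I) | (s + t) y ≠ 0} := by
      rw [closure_subtype]
      have himg : Subtype.val '' {y : ↥(V ∩ I) | (s + t) y ≠ 0}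
          = {y : ℝ | ∃ h : y ∈ V ∩ I, (s + t) ⟨y, h⟩ ≠ 0} := by
        ext y
        constructor
        · rintro ⟨z, hz, rfl⟩; exact ⟨z.2, hz⟩
        · rintro ⟨h, hy⟩; exact ⟨⟨y, h⟩, hy, rfl⟩
      rw [himg]
      exact hxcl
    have := hA.closure_eq ▸ hmem
    exact this
  smul_mem' := by
    intro c s hs
    rcases hs with ⟨hlc, hcl⟩
    by_cases hc : c = 0
    · subst hc
      rw [zero_smul]
      exact zero_locConst k I V
    · constructor
      · exact hlc.comp (fun a => c • a)
      · intro x hxV hxcl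
        have hset : {y : ℝ | ∃ h : y ∈ V ∩ I, (c • s) ⟨y, h⟩ ≠ 0}
            = {y : ℝ | ∃ h : y ∈ V ∩ I, s ⟨y, h⟩ ≠ 0} := by
          ext y
          constructor
          · rintro ⟨h, hy⟩
            refine ⟨h, fun h0 => hy ?_⟩
            show c • s ⟨y, h⟩ = 0
            rw [h0, smul_zero]
          · rintro ⟨h, hy⟩
            exact ⟨h, by simpa [smul_eq_zero, hc] using hy⟩
        rw [hset] at hxcl
        obtain ⟨h, hy⟩ := hcl x hxV hxcl
        exact ⟨h, by simpa [smul_eq_zero, hc] using hy⟩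
/-- Restriction of sections. -/
def resFun (I : Set ℝ) {V W : Set ℝ} (h : W ⊆ V) (s : ↥(V ∩ I) → k) : ↥(W ∩ I) → k :=
  fun y => s ⟨y.1, ⟨h y.2.1, y.2.2⟩⟩

lemma resFun_mem (I : Set ℝ) {V W : Set ℝ} (h : W ⊆ V) (s : ↥(V ∩ I) → k)
    (hs : s ∈ secSub k I V) : resFun k I h s ∈ secSub k I W := by
  obtain ⟨hlc, hcl⟩ := hs
  constructor
  · exact hlc.comp_continuous (Continuous.subtype_mk continuous_subtype_val _)
  · intro x hxW hxcl
    have hsub : {y : ℝ | ∃ h' : y ∈ W ∩ I, resFun k I h s ⟨y, h'⟩ ≠ 0}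
        ⊆ {y : ℝ | ∃ h' : y ∈ V ∩ I, s ⟨y, h'⟩ ≠ 0} := by
      rintro y ⟨h', hy⟩
      exact ⟨⟨h h'.1, h'.2⟩, hy⟩
    obtain ⟨hxVI, hne⟩ := hcl x (h hxW) (closure_mono hsub hxcl)
    exact ⟨⟨hxW, hxVI.2⟩, hne⟩

/-- Restriction as a linear map. -/
def resLM (I : Set ℝ) {V W : Set ℝ} (h : W ⊆ V) : secSub k I V →ₗ[k] secSub k I W where
  toFun s := ⟨resFun k I h s.1, resFun_mem k I h s.1 s.2⟩
  map_add' s t := rfl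
  map_smul' c s := rfl

/-- The presheaf `k_I` on `ℝ`. -/
def intervalPresheaf (I : Set ℝ) : TopCat.Presheaf (ModuleCat.{0} k) (TopCat.of ℝ) where
  obj V := ModuleCat.of k (secSub k I V.unop.1)
  map {V W} f := ModuleCat.ofHom (resLM k I (leOfHom f.unop))
  map_id V := rfl
  map_comp f g := rfl
theorem intervalPresheaf_isSheaf (I : Set ℝ) : (intervalPresheaf k I).IsSheaf := by
  classical
  rw [TopCat.Presheaf.isSheaf_iff_isSheafUniqueGluing]
  intro ι U sf hcomp
  change ∀ i, secSub k I (U i).1 at sf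
  -- pointwise compatibility
  have key : ∀ (i j : ι) (x : ℝ) (hxi : x ∈ (U i).1 ∩ I) (hxj : x ∈ (U j).1 ∩ I),
      (sf i).1 ⟨x, hxi⟩ = (sf j).1 ⟨x, hxj⟩ := by
    intro i j x hxi hxj
    have h := hcomp i j
    have hmem : x ∈ (U i ⊓ U j).1 ∩ I := ⟨⟨hxi.1, hxj.1⟩, hxi.2⟩
    have h2 := congrFun (congrArg Subtype.val h) ⟨x, hmem⟩
    exact h2
  have hmemS : ∀ x : ↥((iSup U : Opens (TopCat.of ℝ)).1 ∩ I), ∃ i, x.1 ∈ U i := by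
    intro x
    exact Opens.mem_iSup.mp x.2.1
  set idx : ↥((iSup U : Opens (TopCat.of ℝ)).1 ∩ I) → ι := fun x => (hmemS x).choose with hidxdef
  have hidx : ∀ x, x.1 ∈ U (idx x) := fun x => (hmemS x).choose_spec
  set s₀ : ↥((iSup U : Opens (TopCat.of ℝ)).1 ∩ I) → k :=
    fun x => (sf (idx x)).1 ⟨x.1, ⟨hidx x, x.2.2⟩⟩ with hs₀def
  have hs₀ : ∀ (x : ↥((iSup U : Opens (TopCat.of ℝ)).1 ∩ I)) (i : ι) (hx : x.1 ∈ U i),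
      s₀ x = (sf i).1 ⟨x.1, ⟨hx, x.2.2⟩⟩ :=
    fun x i hx => key (idx x) i x.1 ⟨hidx x, x.2.2⟩ ⟨hx, x.2.2⟩
  have hlc : IsLocallyConstant s₀ := by
    rw [IsLocallyConstant.iff_exists_open]
    intro x
    obtain ⟨i, hi⟩ := hmemS x
    have hlci : IsLocallyConstant ((sf i).1 : ↥((U i).1 ∩ I) → k) := (sf i).2.1
    obtain ⟨W, hWopen, hpW, hWconst⟩ := hlci.exists_open (⟨x.1, ⟨hi, x.2.2⟩⟩ : ↥((U i).1 ∩ I))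
    obtain ⟨O, hOopen, hWO⟩ := isOpen_induced_iff.mp hWopen
    subst hWO
    refine ⟨Subtype.val ⁻¹' (O ∩ (U i).1), (hOopen.inter (U i).2).preimage continuous_subtype_val,
      ⟨hpW, hi⟩, ?_⟩
    intro y hy
    have hyi : y.1 ∈ U i := hy.2
    rw [hs₀ y i hyi, hs₀ x i hi]
    exact hWconst ⟨y.1, ⟨hyi, y.2.2⟩⟩ hy.1
  have hscl : SuppClosedIn k I (iSup U : Opens (TopCat.of ℝ)).1 s₀ := by
    intro x hxS hxcl
    obtain ⟨i, hi⟩ := Opens.mem_iSup.mp hxS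
    have h1 : x ∈ closure ({y : ℝ | ∃ h : y ∈ (iSup U : Opens (TopCat.of ℝ)).1 ∩ I, s₀ ⟨y, h⟩ ≠ 0}
        ∩ (U i).1) := by
      rw [mem_closure_iff] at hxcl ⊢
      intro O hO hxO
      obtain ⟨z, hz⟩ := hxcl (O ∩ (U i).1) (hO.inter (U i).2) ⟨hxO, hi⟩
      exact ⟨z, hz.1.1, hz.2, hz.1.2⟩
    have hsub : {y : ℝ | ∃ h : y ∈ (iSup U : Opens (TopCat.of ℝ)).1 ∩ I, s₀ ⟨y, h⟩ ≠ 0}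
        ∩ (U i).1 ⊆ {y : ℝ | ∃ h : y ∈ (U i).1 ∩ I, (sf i).1 ⟨y, h⟩ ≠ 0} := by
      rintro y ⟨⟨hy, hne⟩, hyi⟩
      refine ⟨⟨hyi, hy.2⟩, ?_⟩
      rw [← hs₀ ⟨y, hy⟩ i hyi]
      exact hne
    obtain ⟨hyUI, hne⟩ := (sf i).2.2 x hi (closure_mono hsub h1)
    refine ⟨⟨hxS, hyUI.2⟩, ?_⟩
    rw [hs₀ ⟨x, ⟨hxS, hyUI.2⟩⟩ i hyUI.1]
    exact hne
  refine ⟨⟨s₀, hlc, hscl⟩, ?_, ?_⟩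
  · intro i
    apply Subtype.ext
    funext y
    exact hs₀ ⟨y.1, ⟨leOfHom (Opens.leSupr U i) y.2.1, y.2.2⟩⟩ i y.2.1
  · intro t ht
    apply Subtype.ext
    funext x
    have h := ht (idx x)
    have h2 := congrFun (congrArg Subtype.val h) ⟨x.1, ⟨hidx x, x.2.2⟩⟩
    exact h2

/-- The sheaf `k_I` on `ℝ` for an interval `I`: locally constant functions on `V ∩ I`
whose support is closed in `V`. -/
def intervalSheaf (I : Set ℝ) :
    Sheaf (Opens.grothendieckTopology (TopCat.of ℝ)) (ModuleCat.{0} k) :=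
  ⟨intervalPresheaf k I, intervalPresheaf_isSheaf k I⟩
/-- The category of sheaves of `k`-vector spaces on `ℝ`. -/
abbrev RealSheafCat := Sheaf (Opens.grothendieckTopology (TopCat.of ℝ)) (ModuleCat.{0} k)

instance sheafHomSMul (F G : RealSheafCat k) : SMul k (F ⟶ G) :=
  ⟨fun c f => ⟨c • f.hom⟩⟩

instance sheafHomModule (F G : RealSheafCat k) : Module k (F ⟶ G) :=
  Function.Injective.module k
    { toFun := fun f : F ⟶ G => f.hom
      map_zero' := rfl
      map_add' := fun _ _ => rfl }
    (fun _ _ h => InducedCategory.Hom.ext h) (fun _ _ => rfl)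

instance : HasExt.{1} (RealSheafCat k) := by
  letI := HasDerivedCategory.standard (RealSheafCat k)
  exact hasExt_of_hasDerivedCategory _

/-- The interval `(a, b)` with possibly infinite endpoints. -/
def Ioo' (a b : EReal) : Set ℝ := {x : ℝ | a < (x : EReal) ∧ (x : EReal) < b}

/-- The interval `[a, b)` with a possibly infinite right endpoint. -/
def Ico' (a : ℝ) (b : EReal) : Set ℝ := {x : ℝ | a ≤ x ∧ (x : EReal) < b}

/-- The interval `(a, b]` with a possibly infinite left endpoint. -/
def Ioc' (a : EReal) (b : ℝ) : Set ℝ := {x : ℝ | a < (x : EReal) ∧ x ≤ b}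

/-- Identification of sheaves on the topological space `ℝ` with objects of `RealSheafCat`. -/
def toRS (F : TopCat.Sheaf (ModuleCat.{0} k) (TopCat.of ℝ)) : RealSheafCat k := F

/-- Sheafification exists for sheaves of `k`-vector spaces on `ℝ` (no longer found by instance
search automatically). -/
instance realSheafHasSheafify :
    HasSheafify (Opens.grothendieckTopology (TopCat.of ℝ)) (ModuleCat.{0} k) :=
  HasSheafify.mk' _ _ (plusPlusAdjunction _ _)

instance realSheafHasColimits : Limits.HasColimitsOfSize.{0, 0} (RealSheafCat k) :=
  ⟨fun _ _ => ⟨fun _ => Limits.HasColimit.mk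
    ⟨Sheaf.sheafifyCocone (Limits.colimit.cocone _),
      Sheaf.isColimitSheafifyCocone _ (Limits.colimit.isColimit _)⟩⟩⟩


/-!
Cut `closure I` into the compact pieces `closure I ∩ [n, n + 1]`, `n ∈ ℤ`; since `I` is an
interval, each nonempty piece spans a compact interval `J_n = [a_n, b_n] ⊆ closure I`, and these
form a locally finite family covering `I`. As `closure I \ I` consists of at most the two
endpoints of `I`, restricting to `I ∩ J_n` and extending by zero is a morphism
`ρ_n : k_I ⟶ k_{J_n}`, and the `ρ_n` are jointly injective on sections. By local finiteness, on
small open sets only finitely many `k_{J_n}` have nonzero sections, so the finite sums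
`∑ ρ_n ≫ ι_n` agree on overlaps and glue to `φ : k_I ⟶ ∐ k_{J_n}` with components `ρ_n`; hence
`φ` is a monomorphism.
-/

section OrdConnectedClosure

variable {α : Type*} [LinearOrder α] [TopologicalSpace α] [OrderTopology α] {I : Set α}

lemma Set.OrdConnected.Ioo_subset_of_mem_closure (hI : I.OrdConnected) {w z : α}
    (hw : w ∈ closure I) (hz : z ∈ closure I) : Ioo w z ⊆ I := by
  rintro y ⟨hwy, hyz⟩
  obtain ⟨w', hw'y, hw'I⟩ := mem_closure_iff_nhds.mp hw _ (Iio_mem_nhds hwy)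
  obtain ⟨z', hyz', hz'I⟩ := mem_closure_iff_nhds.mp hz _ (Ioi_mem_nhds hyz)
  exact hI.out hw'I hz'I ⟨hw'y.le, hyz'.le⟩

/-- A point of `closure I \ I` is the least or the greatest element of `closure I`. -/
theorem Set.OrdConnected.finite_closure_diff (hI : I.OrdConnected) : (closure I \ I).Finite := by
  have hleast : {y | IsLeast (closure I) y}.Subsingleton := fun y hy z hz => hy.unique hz
  have hgreatest : {y | IsGreatest (closure I) y}.Subsingleton := fun y hy z hz => hy.unique hz
  refine (hleast.finite.union hgreatest.finite).subset ?_
  rintro y ⟨hy, hyI⟩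
  by_cases hlow : y ∈ lowerBounds (closure I)
  · exact Or.inl ⟨hy, hlow⟩
  obtain ⟨w, hw, hwy⟩ : ∃ w ∈ closure I, w < y := by simpa [lowerBounds] using hlow
  refine Or.inr ⟨hy, fun z hz => not_lt.mp fun hyz => hyI ?_⟩
  exact hI.Ioo_subset_of_mem_closure hw hz ⟨hwy, hyz⟩

lemma Set.OrdConnected.disjoint_closure_diff (hI : I.OrdConnected) {J : Set α}
    (hJ : J ⊆ closure I) : Disjoint I (closure (J \ I)) := by
  have hsub : closure (J \ I) ⊆ closure I \ I :=
    hI.finite_closure_diff.isClosed.closure_subset_iff.mpr (sdiff_subset_sdiff_left hJ)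
  exact disjoint_sdiff_right.mono_right hsub

end OrdConnectedClosure

theorem Set.OrdConnected.exists_Icc_cover {I : Set ℝ} (hI : I.OrdConnected) :
    ∃ (A : Type) (a b : A → ℝ), (∀ α, a α ≤ b α) ∧
      (∀ K : Set ℝ, IsCompact K → {α | (Icc (a α) (b α) ∩ K).Nonempty}.Finite) ∧
      (∀ α, Icc (a α) (b α) ⊆ closure I) ∧ I ⊆ ⋃ α, Icc (a α) (b α) := by
  let S : ℤ → Set ℝ := fun n => closure I ∩ Icc (n : ℝ) (n + 1)
  have hSbdd (n : ℤ) : BddBelow (S n) ∧ BddAbove (S n) :=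
    ⟨⟨n, fun _ hy => hy.2.1⟩, ⟨n + 1, fun _ hy => hy.2.2⟩⟩
  have hSclosed (n : ℤ) : IsClosed (S n) := isClosed_closure.inter isClosed_Icc
  let A := {n : ℤ // (S n).Nonempty}
  have ha (α : A) : sInf (S α.1) ∈ S α.1 := (hSclosed α.1).csInf_mem α.2 (hSbdd α.1).1
  have hb (α : A) : sSup (S α.1) ∈ S α.1 := (hSclosed α.1).csSup_mem α.2 (hSbdd α.1).2
  refine ⟨A, fun α => sInf (S α.1), fun α => sSup (S α.1),
    fun α => csInf_le_csSup α.2 (hSbdd α.1).1 (hSbdd α.1).2, ?_,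
    fun α => hI.isPreconnected.closure.ordConnected.out (ha α).1 (hb α).1, ?_⟩
  · intro K hK
    obtain ⟨c, hc⟩ := hK.bddBelow
    obtain ⟨C, hC⟩ := hK.bddAbove
    refine ((finite_Icc ⌈c - 1⌉ ⌊C⌋).preimage Subtype.val_injective.injOn).subset ?_
    rintro α ⟨y, ⟨hay, hyb⟩, hyK⟩
    have hαy : (α.1 : ℝ) ≤ y := (ha α).2.1.trans hay
    have hyα : y ≤ α.1 + 1 := hyb.trans (hb α).2.2
    exact ⟨Int.ceil_le.mpr (by linarith [hc hyK]), Int.le_floor.mpr (by linarith [hC hyK])⟩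
  · intro x hx
    have hxS : x ∈ S ⌊x⌋ := ⟨subset_closure hx, Int.floor_le x, (Int.lt_floor_add_one x).le⟩
    exact mem_iUnion.mpr ⟨⟨⌊x⌋, x, hxS⟩, csInf_le (hSbdd _).1 hxS, le_csSup (hSbdd _).2 hxS⟩

lemma locallyFinite_of_finite_inter_isCompact {X ι : Type*} [TopologicalSpace X]
    [WeaklyLocallyCompactSpace X] {f : ι → Set X}
    (hf : ∀ K, IsCompact K → {i | (f i ∩ K).Nonempty}.Finite) : LocallyFinite f := fun x =>
  let ⟨K, hK, hKx⟩ := exists_compact_mem_nhds x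
  ⟨K, hKx, hf K hK⟩

lemma LocallyFinite.exists_opens_finset {X A : Type*} [TopologicalSpace X] {S : A → Set X}
    (hS : LocallyFinite S) (x : X) :
    ∃ U : Opens X, x ∈ U ∧ ∃ T : Finset A, ∀ α ∉ T, Disjoint (U : Set X) (S α) := by
  obtain ⟨U, ⟨hxU, hUo⟩, hfin⟩ := hS.exists_mem_basis (nhds_basis_opens x)
  refine ⟨⟨U, hUo⟩, hxU, hfin.toFinset, fun α hα => ?_⟩
  exact disjoint_left.mpr fun y hyU hyS => hα (hfin.mem_toFinset.mpr ⟨y, hyS, hyU⟩)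

section GluingHoms

open Opposite

variable {X : TopCat} {C : Type*} [Category C] {ι : Type*}

lemma TopologicalSpace.Opens.isBasis_le_cover (U : ι → Opens X) (hU : ∀ x : X, ∃ i, x ∈ U i) :
    Opens.IsBasis (range (Subtype.val : {W : Opens X // ∃ i, W ≤ U i} → Opens X)) := by
  rw [Opens.isBasis_iff_nbhd]
  intro V x hx
  obtain ⟨i, hi⟩ := hU x
  exact ⟨V ⊓ U i, ⟨⟨V ⊓ U i, i, inf_le_right⟩, rfl⟩, ⟨hx, hi⟩, inf_le_left⟩

theorem TopCat.Sheaf.exists_hom_app_eq_of_cover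
    {F G : CategoryTheory.Sheaf (Opens.grothendieckTopology X) C}
    (U : ι → Opens X) (hU : ∀ x : X, ∃ i, x ∈ U i) (ψ : ι → (F ⟶ G))
    (hψ : ∀ i j (W : Opens X), W ≤ U i → W ≤ U j →
      (ψ i).hom.app (op W) = (ψ j).hom.app (op W)) :
    ∃ φ : F ⟶ G, ∀ i (W : Opens X), W ≤ U i → φ.hom.app (op W) = (ψ i).hom.app (op W) := by
  let B : {W : Opens X // ∃ i, W ≤ U i} → Opens X := Subtype.val
  have hB := Opens.isBasis_le_cover U hU
  let φB : (inducedFunctor B).op ⋙ F.obj ⟶ (inducedFunctor B).op ⋙ G.obj :=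
    { app := fun W => (ψ W.unop.2.choose).hom.app (op W.unop.1)
      naturality := fun W W' f => by
        have hle : W'.unop.1 ≤ W.unop.1 := f.unop.hom.le
        dsimp
        rw [hψ _ W.unop.2.choose _ W'.unop.2.choose_spec (hle.trans W.unop.2.choose_spec)]
        exact (ψ W.unop.2.choose).hom.naturality _ }
  refine ⟨ObjectProperty.homMk (TopCat.Sheaf.restrictHomEquivHom F.obj G hB φB), fun i W hW => ?_⟩
  let W' : {W : Opens X // ∃ i, W ≤ U i} := ⟨W, i, hW⟩
  exact (TopCat.Sheaf.extend_hom_app F.obj G hB φB W').trans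
    (hψ _ _ _ W'.2.choose_spec hW)

end GluingHoms

section LocallyFiniteCoproduct

open Limits Opposite

variable {X : TopCat} {C : Type*} [Category C] [Preadditive C] {A : Type*}
  {F : CategoryTheory.Sheaf (Opens.grothendieckTopology X) C}
  {G : A → CategoryTheory.Sheaf (Opens.grothendieckTopology X) C}
  [HasCoproduct G]

def finsetSigmaLift (f : ∀ α, F ⟶ G α) (T : Finset A) : F ⟶ ∐ G :=
  ∑ α ∈ T, f α ≫ Sigma.ι G α

lemma finsetSigmaLift_comp_π [DecidableEq A] (f : ∀ α, F ⟶ G α) (T : Finset A) (β : A) :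
    finsetSigmaLift f T ≫ Sigma.π G β = if β ∈ T then f β else 0 := by
  simp [finsetSigmaLift, Preadditive.sum_comp, Sigma.ι_π, comp_dite, Finset.sum_dite_eq']

lemma finsetSigmaLift_app_eq_of_subset (f : ∀ α, F ⟶ G α) {T T' : Finset A} (hTT' : T ⊆ T')
    (W : Opens X) (hW : ∀ α ∈ T', α ∉ T → IsZero ((G α).obj.obj (op W))) :
    (finsetSigmaLift f T).hom.app (op W) = (finsetSigmaLift f T').hom.app (op W) := by
  have hom_sum (T : Finset A) :
      (finsetSigmaLift f T).hom = ∑ α ∈ T, (f α ≫ Sigma.ι G α).hom :=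
    (sheafToPresheaf (Opens.grothendieckTopology X) C).map_sum _ T
  rw [hom_sum, hom_sum, NatTrans.app_sum, NatTrans.app_sum]
  refine Finset.sum_subset hTT' fun α hα hαT => ?_
  change (f α).hom.app (op W) ≫ (Sigma.ι G α).hom.app (op W) = 0
  rw [(hW α hα hαT).eq_of_tgt ((f α).hom.app (op W)) 0, zero_comp]

theorem TopCat.Sheaf.exists_comp_π_eq_of_locallyFinite [DecidableEq A] (S : A → Set X)
    (hS : LocallyFinite S)
    (hG : ∀ α (W : Opens X), Disjoint (W : Set X) (S α) → IsZero ((G α).obj.obj (op W)))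
    (f : ∀ α, F ⟶ G α) : ∃ φ : F ⟶ ∐ G, ∀ α, φ ≫ Sigma.π G α = f α := by
  choose U hxU T hT using hS.exists_opens_finset
  have hU : ∀ x : X, ∃ y, x ∈ U y := fun x => ⟨x, hxU x⟩
  have hψ (x y : X) (W : Opens X) (hWx : W ≤ U x) (hWy : W ≤ U y) :
      (finsetSigmaLift f (T x)).hom.app (op W) = (finsetSigmaLift f (T y)).hom.app (op W) := by
    rw [finsetSigmaLift_app_eq_of_subset f (Finset.subset_union_left : T x ⊆ T x ∪ T y) W
        fun α _ hα => hG α W ((hT x α hα).mono_left hWx),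
      finsetSigmaLift_app_eq_of_subset f (Finset.subset_union_right : T y ⊆ T x ∪ T y) W
        fun α _ hα => hG α W ((hT y α hα).mono_left hWy)]
  obtain ⟨φ, hφ⟩ := TopCat.Sheaf.exists_hom_app_eq_of_cover U hU _ hψ
  refine ⟨φ, fun β => CategoryTheory.Sheaf.hom_ext
    (TopCat.Sheaf.hom_ext _ _ (Opens.isBasis_le_cover U hU) ?_)⟩
  rintro ⟨W, x, hWx⟩
  change φ.hom.app (op W) ≫ (Sigma.π G β).hom.app (op W) = (f β).hom.app (op W)
  rw [hφ x W hWx]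
  change (finsetSigmaLift f (T x) ≫ Sigma.π G β).hom.app (op W) = _
  rw [finsetSigmaLift_comp_π]
  split_ifs with hβ
  · rfl
  · exact (hG β W ((hT x β hβ).mono_left hWx)).eq_of_tgt _ _

end LocallyFiniteCoproduct

section RestrictExtend

open Opposite

variable {k} {I J V : Set ℝ}

open scoped Classical in
def restrictExtend (I J : Set ℝ) {V : Set ℝ} (s : ↥(V ∩ I) → k) : ↥(V ∩ J) → k :=
  fun y => if h : y.1 ∈ I then s ⟨y.1, y.2.1, h⟩ else 0

lemma isLocallyConstant_restrictExtend (hIJ : Disjoint I (closure (J \ I)))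
    {s : ↥(V ∩ I) → k} (hs : IsLocallyConstant s) (hsupp : SuppClosedIn k I V s) :
    IsLocallyConstant (restrictExtend I J s) := by
  rw [IsLocallyConstant.iff_exists_open]
  rintro ⟨y, hyV, hyJ⟩
  by_cases hyI : y ∈ I
  · obtain ⟨O, hO, hfiber⟩ := isOpen_induced_iff.mp (hs.isOpen_fiber (s ⟨y, hyV, hyI⟩))
    refine ⟨Subtype.val ⁻¹' (O ∩ (closure (J \ I))ᶜ),
      (hO.inter isClosed_closure.isOpen_compl).preimage continuous_subtype_val,
      ⟨(Set.ext_iff.mp hfiber _).mpr rfl, disjoint_left.mp hIJ hyI⟩, ?_⟩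
    rintro ⟨z, hzV, hzJ⟩ ⟨hzO, hzZ⟩
    have hzI : z ∈ I := by_contra fun hzI => hzZ (subset_closure ⟨hzJ, hzI⟩)
    simp only [restrictExtend, dif_pos hzI, dif_pos hyI]
    exact (Set.ext_iff.mp hfiber ⟨z, hzV, hzI⟩).mp hzO
  · refine ⟨Subtype.val ⁻¹' (closure {z | ∃ h : z ∈ V ∩ I, s ⟨z, h⟩ ≠ 0})ᶜ,
      isClosed_closure.isOpen_compl.preimage continuous_subtype_val,
      fun hy => hyI (hsupp y hyV hy).1.2, ?_⟩
    rintro ⟨z, hzV, hzJ⟩ hz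
    simp only [restrictExtend, dif_neg hyI, dite_eq_right_iff]
    exact fun hzI => by_contra fun hne => hz (subset_closure ⟨⟨hzV, hzI⟩, hne⟩)

lemma suppClosedIn_restrictExtend (hJ : IsClosed J) {s : ↥(V ∩ I) → k}
    (hsupp : SuppClosedIn k I V s) : SuppClosedIn k J V (restrictExtend I J s) := by
  intro x hxV hx
  have hsub : {y | ∃ h : y ∈ V ∩ J, restrictExtend I J s ⟨y, h⟩ ≠ 0}
      ⊆ {y | ∃ h : y ∈ V ∩ I, s ⟨y, h⟩ ≠ 0} ∩ J := by
    rintro y ⟨hy, hne⟩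
    by_cases hyI : y ∈ I
    · exact ⟨⟨⟨hy.1, hyI⟩, by simpa [restrictExtend, hyI] using hne⟩, hy.2⟩
    · simp [restrictExtend, hyI] at hne
  have hxJ : x ∈ J := hJ.closure_subset (closure_mono (hsub.trans inter_subset_right) hx)
  obtain ⟨⟨_, hxI⟩, hne⟩ := hsupp x hxV (closure_mono (hsub.trans inter_subset_left) hx)
  exact ⟨⟨hxV, hxJ⟩, by simpa [restrictExtend, hxI] using hne⟩

variable (k) in
def restrictExtendLinearMap (hJ : IsClosed J) (hIJ : Disjoint I (closure (J \ I))) (V : Set ℝ) :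
    secSub k I V →ₗ[k] secSub k J V where
  toFun s := ⟨restrictExtend I J s.1, isLocallyConstant_restrictExtend hIJ s.2.1 s.2.2,
    suppClosedIn_restrictExtend hJ s.2.2⟩
  map_add' s t := by
    ext y
    by_cases hy : y.1 ∈ I <;> simp [restrictExtend, hy]
  map_smul' c s := by
    ext y
    by_cases hy : y.1 ∈ I <;> simp [restrictExtend, hy]

variable (k) in
def intervalSheafHom (hJ : IsClosed J) (hIJ : Disjoint I (closure (J \ I))) :
    intervalSheaf k I ⟶ intervalSheaf k J :=
  ⟨{ app := fun V => ModuleCat.ofHom (restrictExtendLinearMap k hJ hIJ V.unop.1)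
     naturality := fun _ _ _ => rfl }⟩

lemma isZero_intervalSheaf_obj {V : Opens (TopCat.of ℝ)} (hV : Disjoint (V : Set ℝ) J) :
    Limits.IsZero ((intervalSheaf k J).obj.obj (op V)) :=
  have : Subsingleton ((intervalSheaf k J).obj.obj (op V)) :=
    ⟨fun _ _ => Subtype.ext (funext fun y => (hV.ne_of_mem y.2.1 y.2.2 rfl).elim)⟩
  ModuleCat.isZero_of_subsingleton _

lemma intervalSheafHom_jointly_injective {A : Type*} {J : A → Set ℝ} (hJ : ∀ α, IsClosed (J α))
    (hIJ : ∀ α, Disjoint I (closure (J α \ I))) (hcov : I ⊆ ⋃ α, J α)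
    (V : (Opens (TopCat.of ℝ))ᵒᵖ) {s t : (intervalSheaf k I).obj.obj V}
    (h : ∀ α, (intervalSheafHom k (hJ α) (hIJ α)).hom.app V s
      = (intervalSheafHom k (hJ α) (hIJ α)).hom.app V t) : s = t := by
  apply Subtype.ext
  funext ⟨y, hyV, hyI⟩
  obtain ⟨α, hyα⟩ := mem_iUnion.mp (hcov hyI)
  have hα : restrictExtend I (J α) s.1 ⟨y, hyV, hyα⟩ = restrictExtend I (J α) t.1 ⟨y, hyV, hyα⟩ :=
    congrArg (fun u => u.1 ⟨y, hyV, hyα⟩) (h α)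
  simpa [restrictExtend, hyI] using hα

end RestrictExtend

open CategoryTheory.Limits in
theorem mono_into_coproduct_of_compacts_general (k : Type) [Field k]
    (I : Set ℝ) (hI : I.OrdConnected) :
    ∃ (A : Type) (a b : A → ℝ), (∀ α, a α ≤ b α) ∧
      (∀ K : Set ℝ, IsCompact K → {α | (Set.Icc (a α) (b α) ∩ K).Nonempty}.Finite) ∧
      ∃ φ : intervalSheaf k I ⟶ (∐ fun α : A => intervalSheaf k (Set.Icc (a α) (b α))),
        Mono φ := by
  classical
  obtain ⟨A, a, b, hab, hfin, hcl, hcov⟩ := hI.exists_Icc_cover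
  have hIJ (α : A) := hI.disjoint_closure_diff (hcl α)
  obtain ⟨φ, hφ⟩ := TopCat.Sheaf.exists_comp_π_eq_of_locallyFinite _
    (locallyFinite_of_finite_inter_isCompact hfin) (fun _ _ hW => isZero_intervalSheaf_obj hW)
    fun α => intervalSheafHom k isClosed_Icc (hIJ α)
  refine ⟨A, a, b, hab, hfin, φ, Sheaf.mono_of_injective _ fun V s t hst => ?_⟩
  refine intervalSheafHom_jointly_injective (fun _ => isClosed_Icc) hIJ hcov V fun α => ?_
  rw [← hφ α]
  exact congrArg ((Sigma.π (fun α => intervalSheaf k (Set.Icc (a α) (b α))) α).hom.app V) hst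

open CategoryTheory.Limits in
/-- For every nonempty interval `I ⊆ ℝ` there is a locally finite family of
compact intervals `[a_α, b_α]` and a monomorphism `k_I → ⊕_α k_{[a_α,b_α]}` in the category of
sheaves of `k`-vector spaces on `ℝ`. -/
theorem mono_into_coproduct_of_compacts (k : Type) [Field k]
    (I : Set ℝ) (hne : I.Nonempty) (hI : I.OrdConnected) :
    ∃ (A : Type) (a b : A → ℝ), (∀ α, a α ≤ b α) ∧
      (∀ K : Set ℝ, IsCompact K → {α | (Set.Icc (a α) (b α) ∩ K).Nonempty}.Finite) ∧
      ∃ φ : intervalSheaf k I ⟶ (∐ fun α : A => intervalSheaf k (Set.Icc (a α) (b α))),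
        Mono φ :=
  mono_into_coproduct_of_compacts_general k I hI

end
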